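/- arXiv:2108.11853 — 6 statements merged into one kernel-verified Lean document; each statement's English description precedes it below -/
import Mathlib

section
/- Let γ ∈ ℓ²(ℤ) be non-negative, non-increasing on ℕ (γ_0 ≥ γ_1 ≥ ...) with γ_{-k} ≥ γ_k for k ≥ 1. Fix r ∈ ℕ with ∑_{j≥r} γ_j² > 0, and define μ_k = 0 for k < r and μ_k = γ_k² (∑_{ℓ≥r} γ_ℓ²)^{-1/2} for k ≥ r. Let γ̃_ℓ² = ∑_{j∈ℤ} μ_j μ_{j+ℓ}. Then γ̃_ℓ² ≤ γ_ℓ² for all ℓ ∈ ℤ. -/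
theorem stmt_2 (γ : ℤ → ℝ) (hnn : ∀ k, 0 ≤ γ k)
    (hsum : Summable fun k : ℤ => γ k ^ 2)
    (hmono : ∀ k l : ℕ, k ≤ l → γ (l : ℤ) ≤ γ (k : ℤ))
    (hsym : ∀ k : ℕ, 1 ≤ k → γ (k : ℤ) ≤ γ (-(k : ℤ)))
    (r : ℕ) (hpos : 0 < ∑' j : ℕ, γ ((r : ℤ) + j) ^ 2)
    (μ : ℤ → ℝ)
    (hμ : ∀ k : ℤ, μ k =
      if k < (r : ℤ) then 0
      else γ k ^ 2 / Real.sqrt (∑' j : ℕ, γ ((r : ℤ) + j) ^ 2)) :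
    ∀ ℓ : ℤ, (∑' j : ℤ, μ j * μ (j + ℓ)) ≤ γ ℓ ^ 2 := by
  set S : ℝ := ∑' j : ℕ, γ ((r : ℤ) + j) ^ 2 with hSdef
  have hS : 0 < S := hpos
  set g : ℤ → ℝ := fun j => if j < (r : ℤ) then 0 else γ j ^ 2 with hg
  have hgnn : ∀ j, 0 ≤ g j := fun j => by
    simp only [hg]; split
    · exact le_rfl
    · positivity
  have hgle : ∀ j, g j ≤ γ j ^ 2 := fun j => by
    simp only [hg]; split
    · positivity
    · exact le_rfl
  have hgsum : Summable g := Summable.of_nonneg_of_le hgnn hgle hsum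
  have hinj : Function.Injective (fun n : ℕ => (r : ℤ) + n) := by
    intro a b hab
    simpa using hab
  have htg : ∑' j : ℤ, g j = S := by
    rw [hSdef, ← Function.Injective.tsum_eq hinj]
    · congr 1
      funext n
      simp only [hg]
      rw [if_neg (by omega)]
    · intro x hx
      simp only [Function.mem_support, hg, ne_eq, ite_eq_left_iff, not_forall] at hx
      obtain ⟨hxr, -⟩ := hx
      push_neg at hxr
      exact ⟨(x - r).toNat, by simp; omega⟩
  have hμ' : ∀ k, μ k = g k / Real.sqrt S := fun k => by
    rw [hμ k]
    simp only [hg]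
    split
    · simp
    · rfl
  have hμnn : ∀ k, 0 ≤ μ k := fun k => by
    rw [hμ' k]; exact div_nonneg (hgnn k) (Real.sqrt_nonneg _)
  have key : ∀ m : ℤ, 0 ≤ m → (∑' j : ℤ, μ j * μ (j + m)) ≤ γ m ^ 2 := by
    intro m hm
    have hbound : ∀ j, μ j * μ (j + m) ≤ γ m ^ 2 * (g j / S) := by
      intro j
      have heq : μ j * μ (j + m) = g j * g (j + m) / S := by
        rw [hμ' j, hμ' (j + m), div_mul_div_comm, Real.mul_self_sqrt hS.le]
      rw [heq]
      by_cases hj : j < (r : ℤ)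
      · have : g j = 0 := by simp [hg, hj]
        rw [this, zero_mul, zero_div]
        positivity
      · push_neg at hj
        have hjm : (0 : ℤ) ≤ j + m := by omega
        have h2 := hmono m.toNat (j + m).toNat (by omega)
        rw [Int.toNat_of_nonneg hm, Int.toNat_of_nonneg hjm] at h2
        have h1 : g (j + m) ≤ γ m ^ 2 :=
          le_trans (hgle _) (pow_le_pow_left₀ (hnn _) h2 2)
        have h3 : g j * g (j + m) ≤ γ m ^ 2 * g j := by
          rw [mul_comm (γ m ^ 2)]
          exact mul_le_mul_of_nonneg_left h1 (hgnn j)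
        calc g j * g (j + m) / S ≤ γ m ^ 2 * g j / S := by gcongr
          _ = γ m ^ 2 * (g j / S) := mul_div_assoc _ _ _
    have hmaj : Summable fun j : ℤ => γ m ^ 2 * (g j / S) :=
      ((hgsum.div_const S).mul_left _)
    have hls : Summable fun j : ℤ => μ j * μ (j + m) :=
      Summable.of_nonneg_of_le (fun j => mul_nonneg (hμnn j) (hμnn _)) hbound hmaj
    calc (∑' j : ℤ, μ j * μ (j + m)) ≤ ∑' j : ℤ, γ m ^ 2 * (g j / S) :=
          Summable.tsum_le_tsum hbound hls hmaj
      _ = γ m ^ 2 * (S / S) := by rw [tsum_mul_left, tsum_div_const, htg]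
      _ = γ m ^ 2 := by rw [div_self hS.ne', mul_one]
  intro ℓ
  rcases le_or_gt 0 ℓ with hl | hl
  · exact key ℓ hl
  · have h1 : (∑' j : ℤ, μ j * μ (j + ℓ)) = ∑' j : ℤ, μ j * μ (j + -ℓ) := by
      rw [← (Equiv.addRight (-ℓ)).tsum_eq (fun j => μ j * μ (j + ℓ))]
      congr 1
      funext j
      simp only [Equiv.coe_addRight]
      rw [add_assoc, neg_add_cancel, add_zero, mul_comm]
    have h2 := key (-ℓ) (by omega)
    have h3 : γ (-ℓ) ≤ γ ℓ := by
      have := hsym (-ℓ).toNat (by omega)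
      rw [Int.toNat_of_nonneg (by omega : (0:ℤ) ≤ -ℓ)] at this
      simpa using this
    calc (∑' j : ℤ, μ j * μ (j + ℓ)) = ∑' j : ℤ, μ j * μ (j + -ℓ) := h1
      _ ≤ γ (-ℓ) ^ 2 := h2
      _ ≤ γ ℓ ^ 2 := pow_le_pow_left₀ (hnn _) h3 2
end

section
/- Let a ∈ ℓ²(ℕ) be non-negative and non-increasing, and suppose there is b > 0 with a_{2n} ≥ b·a_n for all n ≥ 1. Then for every r ≥ 1, (∑_{j≥r} a_j²)² / (2 ∑_{j≥r} a_j⁴) ≥ (b² r)/2, provided ∑_{j≥r} a_j⁴ > 0. In particular n(r) := ⌊(∑_{j≥r} a_j²)²/(2∑_{j≥r} a_j⁴)⌋ tends to infinity as r → ∞. -/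
theorem stmt_5 (a : ℕ → ℝ) (hnn : ∀ n, 0 ≤ a n) (hmono : Antitone a)
    (hsum : Summable fun n => a n ^ 2) (b : ℝ) (hb : 0 < b)
    (hreg : ∀ n, 1 ≤ n → b * a n ≤ a (2 * n))
    (hpos : ∀ r : ℕ, 1 ≤ r → 0 < ∑' j : ℕ, a (r + j) ^ 4) :
    (∀ r : ℕ, 1 ≤ r →
      b ^ 2 * r / 2
        ≤ (∑' j : ℕ, a (r + j) ^ 2) ^ 2 / (2 * ∑' j : ℕ, a (r + j) ^ 4))
    ∧ Filter.Tendsto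
        (fun r : ℕ =>
          ⌊(∑' j : ℕ, a (r + j) ^ 2) ^ 2 / (2 * ∑' j : ℕ, a (r + j) ^ 4)⌋₊)
        Filter.atTop Filter.atTop := by
  have key : ∀ r : ℕ, 1 ≤ r →
      b ^ 2 * r / 2
        ≤ (∑' j : ℕ, a (r + j) ^ 2) ^ 2 / (2 * ∑' j : ℕ, a (r + j) ^ 4) := by
    intro r hr
    set S2 := ∑' j : ℕ, a (r + j) ^ 2 with hS2def
    set S4 := ∑' j : ℕ, a (r + j) ^ 4 with hS4def
    have hs2 : Summable fun j => a (r + j) ^ 2 := by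
      simpa [add_comm] using (summable_nat_add_iff r).2 hsum
    have hle4 : ∀ j, a (r + j) ^ 4 ≤ a r ^ 2 * a (r + j) ^ 2 := by
      intro j
      have h1 : a (r + j) ≤ a r := hmono (Nat.le_add_right r j)
      have h2 : a (r + j) ^ 2 ≤ a r ^ 2 := pow_le_pow_left₀ (hnn _) h1 2
      calc a (r + j) ^ 4 = a (r + j) ^ 2 * a (r + j) ^ 2 := by ring
        _ ≤ a r ^ 2 * a (r + j) ^ 2 :=
            mul_le_mul_of_nonneg_right h2 (sq_nonneg _)
    have hs4 : Summable fun j => a (r + j) ^ 4 :=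
      Summable.of_nonneg_of_le (fun j => by positivity) hle4 (hs2.mul_left _)
    have hS4pos : 0 < S4 := hpos r hr
    have hS2lb : (r : ℝ) * a (2 * r) ^ 2 ≤ S2 := by
      have h1 : ∑ j ∈ Finset.range r, a (2 * r) ^ 2
          ≤ ∑ j ∈ Finset.range r, a (r + j) ^ 2 := by
        apply Finset.sum_le_sum
        intro j hj
        have hj' : j < r := Finset.mem_range.mp hj
        have : r + j ≤ 2 * r := by omega
        exact pow_le_pow_left₀ (hnn _) (hmono this) 2
      have h2 := h1.trans (Summable.sum_le_tsum (Finset.range r)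
        (fun j _ => by positivity) hs2)
      simpa [mul_comm] using h2
    have ha2r : b ^ 2 * a r ^ 2 ≤ a (2 * r) ^ 2 := by
      have h := hreg r hr
      have hnb : 0 ≤ b * a r := mul_nonneg hb.le (hnn r)
      calc b ^ 2 * a r ^ 2 = (b * a r) ^ 2 := by ring
        _ ≤ a (2 * r) ^ 2 := pow_le_pow_left₀ hnb h 2
    have hS4le : S4 ≤ a r ^ 2 * S2 := by
      have := Summable.tsum_le_tsum hle4 hs4 (hs2.mul_left (a r ^ 2))
      simpa [tsum_mul_left] using this
    have hS2nn : 0 ≤ S2 := tsum_nonneg fun j => by positivity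
    have hS2lb' : (r : ℝ) * (b ^ 2 * a r ^ 2) ≤ S2 := by
      have : (r : ℝ) * (b ^ 2 * a r ^ 2) ≤ (r : ℝ) * a (2 * r) ^ 2 :=
        mul_le_mul_of_nonneg_left ha2r (by positivity)
      linarith
    have main : b ^ 2 * r * S4 ≤ S2 ^ 2 := by
      calc b ^ 2 * r * S4 ≤ b ^ 2 * r * (a r ^ 2 * S2) :=
            mul_le_mul_of_nonneg_left hS4le (by positivity)
        _ = ((r : ℝ) * (b ^ 2 * a r ^ 2)) * S2 := by ring
        _ ≤ S2 * S2 := mul_le_mul_of_nonneg_right hS2lb' hS2nn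
        _ = S2 ^ 2 := by ring
    rw [div_le_div_iff₀ (by norm_num) (by positivity)]
    nlinarith [main]
  refine ⟨key, ?_⟩
  have h1 : Filter.Tendsto (fun r : ℕ => b ^ 2 * r / 2) Filter.atTop Filter.atTop := by
    apply Filter.Tendsto.atTop_div_const (by norm_num : (0:ℝ) < 2)
    exact Filter.Tendsto.const_mul_atTop (by positivity) tendsto_natCast_atTop_atTop
  have h2 : Filter.Tendsto
      (fun r : ℕ => (∑' j : ℕ, a (r + j) ^ 2) ^ 2 / (2 * ∑' j : ℕ, a (r + j) ^ 4))
      Filter.atTop Filter.atTop := by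
    apply Filter.tendsto_atTop_mono' _ _ h1
    filter_upwards [Filter.eventually_ge_atTop 1] with r hr
    exact key r hr
  exact (tendsto_nat_floor_atTop.comp h2)
end

section
/- Let a ∈ ℓ²(ℕ) be non-negative and non-increasing with a_{2n} ≥ b·a_n for all n ≥ 1 (b > 0, and ∑_{j≥r} a_j⁴ > 0 for all r). Define n(r) = ⌊(∑_{j≥r} a_j²)²/(2∑_{j≥r} a_j⁴)⌋. Then n(2r) ≤ (2/b⁴)·n(r) for all sufficiently large r (namely whenever n(r) ≥ 1). -/
theorem stmt_6 (a : ℕ → ℝ) (hnn : ∀ n, 0 ≤ a n) (hmono : Antitone a)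
    (hsum : Summable fun n => a n ^ 2) (b : ℝ) (hb : 0 < b)
    (hreg : ∀ n, 1 ≤ n → b * a n ≤ a (2 * n))
    (hpos : ∀ r : ℕ, 0 < ∑' j : ℕ, a (r + j) ^ 4) :
    ∀ r : ℕ,
      1 ≤ ⌊(∑' j : ℕ, a (r + j) ^ 2) ^ 2 / (2 * ∑' j : ℕ, a (r + j) ^ 4)⌋₊ →
      (⌊(∑' j : ℕ, a (2 * r + j) ^ 2) ^ 2 / (2 * ∑' j : ℕ, a (2 * r + j) ^ 4)⌋₊ : ℝ)
        ≤ 2 / b ^ 4 *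
          ⌊(∑' j : ℕ, a (r + j) ^ 2) ^ 2 / (2 * ∑' j : ℕ, a (r + j) ^ 4)⌋₊ := by
  -- a is everywhere positive
  have apos : ∀ n, 0 < a n := by
    intro n
    rcases lt_or_eq_of_le (hnn n) with h | h
    · exact h
    · exfalso
      have hz : ∀ j : ℕ, a (n + j) ^ 4 = 0 := by
        intro j
        have h1 : a (n + j) ≤ a n := hmono (Nat.le_add_right n j)
        have h2 : a (n + j) = 0 := le_antisymm (by rw [← h] at h1; exact h1) (hnn _)
        simp [h2]
      have := hpos n
      rw [tsum_congr hz, tsum_zero] at this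
      exact lt_irrefl 0 this
  have hb1 : b ≤ 1 := by
    have h1 := hreg 1 le_rfl
    have h2 : a 2 ≤ a 1 := hmono (by norm_num)
    have := (apos 1)
    nlinarith
  have hreg0 : ∀ n, b * a n ≤ a (2 * n) := by
    intro n
    rcases Nat.eq_zero_or_pos n with h | h
    · subst h; simpa using mul_le_of_le_one_left (hnn 0) hb1
    · exact hreg n h
  -- summability of fourth powers
  have hsum4 : Summable fun n => a n ^ 4 := by
    have hle : ∀ n, a n ^ 4 ≤ a 0 ^ 2 * a n ^ 2 := by
      intro n
      have h1 : a n ≤ a 0 := hmono (Nat.zero_le n)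
      have h2 : a n ^ 2 ≤ a 0 ^ 2 := by nlinarith [hnn n, hnn 0]
      nlinarith [sq_nonneg (a n), mul_le_mul_of_nonneg_right h2 (sq_nonneg (a n))]
    exact Summable.of_nonneg_of_le (fun n => by positivity) hle
      (hsum.mul_left (a 0 ^ 2))
  have tail2 : ∀ r : ℕ, Summable fun j => a (r + j) ^ 2 := by
    intro r
    have := (summable_nat_add_iff r).mpr hsum
    simpa [add_comm] using this
  have tail4 : ∀ r : ℕ, Summable fun j => a (r + j) ^ 4 := by
    intro r
    have := (summable_nat_add_iff r).mpr hsum4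
    simpa [add_comm] using this
  intro r hn
  set A := ∑' j : ℕ, a (r + j) ^ 2 with hA
  set B := ∑' j : ℕ, a (r + j) ^ 4 with hB
  set C := ∑' j : ℕ, a (2 * r + j) ^ 2 with hC
  set D := ∑' j : ℕ, a (2 * r + j) ^ 4 with hD
  have hBpos : 0 < B := hpos r
  have hDpos : 0 < D := hpos (2 * r)
  have hC0 : 0 ≤ C := tsum_nonneg fun j => by positivity
  -- C ≤ A
  have hCA : C ≤ A := by
    apply Summable.tsum_le_tsum _ (tail2 (2 * r)) (tail2 r)
    intro j
    have : a (2 * r + j) ≤ a (r + j) := hmono (by omega)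
    nlinarith [hnn (2 * r + j), hnn (r + j)]
  -- b^4 * B ≤ D
  have hBD : b ^ 4 * B ≤ D := by
    rw [← tsum_mul_left]
    apply Summable.tsum_le_tsum_of_inj (fun j => 2 * j)
      (fun x y h => Nat.eq_of_mul_eq_mul_left two_pos h)
      (fun c _ => by positivity)
      ?_ ((tail4 r).mul_left _) (tail4 (2 * r))
    intro j
    have h1 : b * a (r + j) ≤ a (2 * (r + j)) := hreg0 (r + j)
    have h2 : 0 ≤ b * a (r + j) := mul_nonneg hb.le (hnn _)
    have h3 : (b * a (r + j)) ^ 4 ≤ a (2 * (r + j)) ^ 4 := by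
      exact pow_le_pow_left₀ h2 h1 4
    have h4 : (2 : ℕ) * r + 2 * j = 2 * (r + j) := by ring
    calc b ^ 4 * a (r + j) ^ 4 = (b * a (r + j)) ^ 4 := by ring
      _ ≤ a (2 * (r + j)) ^ 4 := h3
      _ = a (2 * r + 2 * j) ^ 4 := by rw [h4]
  -- numeric part
  have hb4 : (0 : ℝ) < b ^ 4 := by positivity
  have h1 : (⌊C ^ 2 / (2 * D)⌋₊ : ℝ) ≤ C ^ 2 / (2 * D) :=
    Nat.floor_le (by positivity)
  have h2 : C ^ 2 / (2 * D) ≤ A ^ 2 / (2 * (b ^ 4 * B)) := by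
    apply div_le_div₀ (by positivity) (by nlinarith) (by positivity) (by linarith)
  have heq : A ^ 2 / (2 * (b ^ 4 * B)) = (A ^ 2 / (2 * B)) / b ^ 4 := by
    rw [div_div]; ring_nf
  have h3 : A ^ 2 / (2 * B) < (⌊A ^ 2 / (2 * B)⌋₊ : ℝ) + 1 :=
    Nat.lt_floor_add_one _
  have hn' : (1 : ℝ) ≤ (⌊A ^ 2 / (2 * B)⌋₊ : ℝ) := by exact_mod_cast hn
  rw [heq] at h2
  have h5 : A ^ 2 / (2 * B) ≤ 2 * (⌊A ^ 2 / (2 * B)⌋₊ : ℝ) := by linarith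
  have h4 : (A ^ 2 / (2 * B)) / b ^ 4 ≤ (2 * (⌊A ^ 2 / (2 * B)⌋₊ : ℝ)) / b ^ 4 := by
    gcongr
  have heq2 : (2 * (⌊A ^ 2 / (2 * B)⌋₊ : ℝ)) / b ^ 4
      = 2 / b ^ 4 * (⌊A ^ 2 / (2 * B)⌋₊ : ℝ) := by ring
  linarith
end

section
/- Let f(x) = ∑_{m∈ℤ} α_m e^{2πimx} with α ∈ ℓ¹(ℤ), and let S_n(f) = (1/(2n+1)) ∑_{j=0}^{2n} f(j/(2n+1)) D_n(· − j/(2n+1)), where D_n(x) = ∑_{|l|≤n} e^{2πilx} is the Dirichlet kernel. Then the L²([0,1])-error satisfies ‖f − S_n(f)‖₂² = ∑_{|j|>n} |α_j|² + ∑_{|k|≤n} |∑_{θ≠0} α_{k+θ(2n+1)}|². -/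
/-!
The samples of `f = ∑ α_m e_m` at the points `j / (2n+1)` only see the frequencies modulo
`2n+1`: by the discrete orthogonality of the `(2n+1)`-th roots of unity, the interpolant is
`∑_{|l| ≤ n} (∑_θ α_{l+θ(2n+1)}) e_l`. Hence `f - S_n f` is the absolutely convergent
trigonometric series with coefficients `α_m` for `|m| > n` and `-∑_{θ ≠ 0} α_{k+θ(2n+1)}` for
`|k| ≤ n`, and Parseval's identity on the circle gives the result.
-/

open Complex MeasureTheory AddCircle Finset
open scoped Real

section Parseval

variable {T : ℝ} [Fact (0 < T)] {γ : ℤ → ℂ}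

theorem summable_smul_fourier (hγ : Summable fun m => ‖γ m‖) :
    Summable fun m => γ m • (fourier m : C(AddCircle T, ℂ)) :=
  .of_norm (by simpa [norm_smul, fourier_norm] using hγ)

theorem fourierCoeff_tsum_smul_fourier (hγ : Summable fun m => ‖γ m‖) (n : ℤ) :
    fourierCoeff (⇑(∑' m, γ m • (fourier m : C(AddCircle T, ℂ)))) n = γ n := by
  have hint : ∀ m, Integrable (fun t : AddCircle T => fourier (-n) t • (γ m • fourier m t))
      haarAddCircle := fun m =>
    (by fun_prop : Continuous _).integrable_of_hasCompactSupport (.of_compactSpace _)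
  have hnorm : ∀ m, ∫ t : AddCircle T, ‖fourier (-n) t • (γ m • fourier m t)‖ ∂haarAddCircle
      = ‖γ m‖ := fun m => by
    simp only [smul_eq_mul, norm_mul, fourier_apply, Circle.norm_coe, one_mul, mul_one,
      integral_const, probReal_univ]
  calc fourierCoeff (⇑(∑' m, γ m • (fourier m : C(AddCircle T, ℂ)))) n
      = ∫ t, ∑' m, fourier (-n) t • (γ m • fourier m t) ∂haarAddCircle := by
        refine integral_congr_ae (.of_forall fun t => ?_)
        simp only [← ContinuousMap.tsum_apply (summable_smul_fourier hγ), ContinuousMap.smul_apply]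
        exact (tsum_const_smul'' _).symm
    _ = ∑' m, γ m * fourierCoeff (fourier m : C(AddCircle T, ℂ)) n := by
        rw [← integral_tsum_of_summable_integral_norm hint (by simpa only [hnorm] using hγ)]
        refine tsum_congr fun m => ?_
        simp_rw [fourierCoeff, smul_comm (fourier (-n) _) (γ m), integral_smul, smul_eq_mul]
    _ = γ n := by
        simp [fourierCoeff_fourier, Pi.single_apply]

theorem hasSum_sq_norm_integral_tsum_fourier (hγ : Summable fun m => ‖γ m‖) :
    HasSum (fun m => ‖γ m‖ ^ 2)
      (∫ t, ‖∑' m, γ m * fourier m t‖ ^ 2 ∂(haarAddCircle (T := T))) := by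
  set g : C(AddCircle T, ℂ) := ∑' m, γ m • fourier m
  have hg : ∀ t, ∑' m, γ m * fourier m t = g t := fun t => by
    simp only [g, ← ContinuousMap.tsum_apply (summable_smul_fourier hγ), ContinuousMap.smul_apply,
      smul_eq_mul]
  have hcoeff : ∀ i, fourierCoeff g i = γ i := fourierCoeff_tsum_smul_fourier hγ
  have parseval := hasSum_sq_fourierCoeff (ContinuousMap.toLp (E := ℂ) 2 haarAddCircle ℂ g)
  simp only [fourierCoeff_toLp, hcoeff] at parseval
  convert parseval using 1
  refine integral_congr_ae ?_
  filter_upwards [ContinuousMap.coeFn_toLp (E := ℂ) (p := 2) haarAddCircle (𝕜 := ℂ) g] with t ht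
  rw [ht, hg]

theorem hasSum_sq_norm_intervalIntegral_tsum_fourier (hγ : Summable fun m => ‖γ m‖) (a : ℝ) :
    HasSum (fun m => ‖γ m‖ ^ 2)
      (T⁻¹ * ∫ x in a..a + T, ‖∑' m, γ m * fourier m (x : AddCircle T)‖ ^ 2) := by
  rw [AddCircle.intervalIntegral_preimage T a (fun t => ‖∑' m, γ m * fourier m t‖ ^ 2),
    ← smul_eq_mul, ← integral_haarAddCircle]
  exact hasSum_sq_norm_integral_tsum_fourier hγ

end Parseval

theorem geom_sum_eq_ite_of_pow_eq_one {K : Type*} [DivisionRing K] [DecidableEq K] {ω : K} {N : ℕ}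
    (h : ω ^ N = 1) : ∑ j ∈ range N, ω ^ j = if ω = 1 then (N : K) else 0 := by
  split_ifs with h1
  · simp [h1]
  · rw [geom_sum_eq h1 N, h, sub_self, zero_div]

theorem sum_range_exp_two_pi_I_mul_div {N : ℕ} (hN : N ≠ 0) (k : ℤ) :
    ∑ j ∈ range N, exp (2 * π * I * k * j / N) = if (N : ℤ) ∣ k then (N : ℂ) else 0 := by
  have hζ := isPrimitiveRoot_exp N hN
  set ω := exp (2 * π * I / N) ^ k
  have hpow : ∀ j : ℕ, exp (2 * π * I * k * j / N) = ω ^ j := fun j => by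
    rw [← zpow_natCast, ← zpow_mul, ← exp_int_mul]
    congr 1
    push_cast
    ring
  have hωN : ω ^ N = 1 := by
    rw [← zpow_natCast, ← zpow_mul, mul_comm k, zpow_mul, zpow_natCast, hζ.pow_eq_one, one_zpow]
  simp only [hpow, geom_sum_eq_ite_of_pow_eq_one hωN, ω, hζ.zpow_eq_one_iff_dvd]

theorem Int.add_mul_injective {N : ℤ} (hN : N ≠ 0) (l : ℤ) :
    Function.Injective fun θ : ℤ => l + θ * N :=
  fun θ₁ θ₂ h => by simpa [hN] using h

theorem tsum_ite_dvd_sub_eq_tsum {E : Type*} [AddCommMonoid E] [TopologicalSpace E] (α : ℤ → E)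
    {N : ℤ} (hN : N ≠ 0) (l : ℤ) :
    ∑' m, (if N ∣ m - l then α m else 0) = ∑' θ, α (l + θ * N) := by
  symm
  convert (Int.add_mul_injective hN l).tsum_eq (f := fun m => if N ∣ m - l then α m else 0) ?_
    using 2 with θ
  · simp
  · intro m hm
    obtain ⟨θ, hθ⟩ : N ∣ m - l := by by_contra h; simp [h] at hm
    exact ⟨θ, by simp only; linear_combination -hθ⟩

theorem Summable.tsum_eq_add_tsum_subtype_ne {E β : Type*} [AddCommGroup E] [TopologicalSpace E]
    [IsTopologicalAddGroup E] [T2Space E] [DecidableEq β] {g : β → E} (hg : Summable g) (b : β) :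
    ∑' x, g x = g b + ∑' x : {x // x ≠ b}, g x := by
  rw [hg.tsum_eq_add_tsum_ite b]
  refine congrArg (g b + ·) ((tsum_congr fun x => ?_).trans (tsum_subtype {x | x ≠ b} g).symm)
  simp [Set.indicator_apply, ite_not]

theorem Summable.tsum_eq_tsum_lt_abs_add_sum_Icc {E : Type*} [AddCommGroup E] [UniformSpace E]
    [IsUniformAddGroup E] [CompleteSpace E] [T2Space E] {g : ℤ → E} (hg : Summable g) (n : ℤ) :
    ∑' m, g m = ∑' m : {m : ℤ // n < |m|}, g m + ∑ k ∈ Icc (-n) n, g k := by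
  have hcompl : {m : ℤ | n < |m|}ᶜ = ↑(Icc (-n) n) := by
    ext m
    simp [abs_le]
  rw [← hg.tsum_subtype_add_tsum_subtype_compl {m | n < |m|}, hcompl]
  exact congrArg _ (Finset.tsum_subtype (Icc (-n) n) g)

theorem Summable.tsum_add_mul_eq_add_tsum_ne_zero {E : Type*} [NormedAddCommGroup E]
    [CompleteSpace E] {α : ℤ → E} (hα : Summable fun m => ‖α m‖) {N : ℤ} (hN : N ≠ 0) (k : ℤ) :
    ∑' θ, α (k + θ * N) = α k + ∑' θ : {θ : ℤ // θ ≠ 0}, α (k + θ * N) := by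
  simpa using (hα.comp_injective (Int.add_mul_injective hN k)).of_norm.tsum_eq_add_tsum_subtype_ne 0

section Sampling

variable {α : ℤ → ℂ} {f : ℝ → ℂ} {N : ℕ}

theorem sum_samples_mul_exp_neg_eq_tsum (hα : Summable fun m => ‖α m‖)
    (hf : ∀ x : ℝ, f x = ∑' m : ℤ, α m * exp (2 * π * I * m * x)) (hN : N ≠ 0) (l : ℤ) :
    (1 / (N : ℂ)) * ∑ j ∈ range N, f ((j : ℝ) / N) * exp (-(2 * π * I * l * j / N))
      = ∑' θ : ℤ, α (l + θ * N) := by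
  have hterm : ∀ (j : ℕ) (m : ℤ), α m * exp (2 * π * I * m * ((j : ℝ) / N : ℝ))
      * exp (-(2 * π * I * l * j / N)) = α m * exp (2 * π * I * (m - l : ℤ) * j / N) := by
    intro j m
    rw [mul_assoc, ← exp_add]
    push_cast
    ring_nf
  have hsum : ∀ j : ℕ, Summable fun m : ℤ => α m * exp (2 * π * I * (m - l : ℤ) * j / N) :=
    fun j => hα.of_norm_bounded fun m => by
      rw [norm_mul, norm_exp]
      simp
  calc (1 / (N : ℂ)) * ∑ j ∈ range N, f ((j : ℝ) / N) * exp (-(2 * π * I * l * j / N))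
      = (1 / (N : ℂ)) * ∑ j ∈ range N, ∑' m : ℤ, α m * exp (2 * π * I * (m - l : ℤ) * j / N) := by
        simp_rw [hf, ← tsum_mul_right, hterm]
    _ = (1 / (N : ℂ)) * ∑' m : ℤ, α m * ∑ j ∈ range N, exp (2 * π * I * (m - l : ℤ) * j / N) := by
        rw [← Summable.tsum_finsetSum fun j _ => hsum j]
        simp_rw [mul_sum]
    _ = ∑' m : ℤ, if (N : ℤ) ∣ m - l then α m else 0 := by
        rw [← tsum_mul_left]
        refine tsum_congr fun m => ?_
        rw [sum_range_exp_two_pi_I_mul_div hN]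
        split_ifs
        · field_simp
        · rw [mul_zero, mul_zero]
    _ = ∑' θ : ℤ, α (l + θ * N) := tsum_ite_dvd_sub_eq_tsum α (by exact_mod_cast hN) l

theorem interpolant_eq_sum_tsum (hα : Summable fun m => ‖α m‖)
    (hf : ∀ x : ℝ, f x = ∑' m : ℤ, α m * exp (2 * π * I * m * x)) (hN : N ≠ 0)
    (s : Finset ℤ) (x : ℝ) :
    (1 / (N : ℂ)) * ∑ j ∈ range N,
        f ((j : ℝ) / N) * ∑ l ∈ s, exp (2 * π * I * l * (x - (j : ℝ) / N))
      = ∑ l ∈ s, (∑' θ : ℤ, α (l + θ * N)) * exp (2 * π * I * l * x) := by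
  simp_rw [← sum_samples_mul_exp_neg_eq_tsum hα hf hN, mul_sum, sum_mul]
  rw [sum_comm]
  refine sum_congr rfl fun l _ => sum_congr rfl fun j _ => ?_
  have hshift : exp (2 * π * I * l * (x - (j : ℝ) / N))
      = exp (-(2 * π * I * l * j / N)) * exp (2 * π * I * l * x) := by
    rw [← exp_add]
    push_cast
    ring_nf
  rw [hshift]
  ring

theorem sub_interpolant_eq_tsum (hα : Summable fun m => ‖α m‖)
    (hf : ∀ x : ℝ, f x = ∑' m : ℤ, α m * exp (2 * π * I * m * x)) (hN : N ≠ 0)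
    (s : Finset ℤ) (x : ℝ) :
    f x - (1 / (N : ℂ)) * ∑ j ∈ range N,
        f ((j : ℝ) / N) * ∑ l ∈ s, exp (2 * π * I * l * (x - (j : ℝ) / N))
      = ∑' m : ℤ, (α m - (s : Set ℤ).indicator (fun l => ∑' θ : ℤ, α (l + θ * N)) m)
          * exp (2 * π * I * m * x) := by
  have hsum : Summable fun m : ℤ => α m * exp (2 * π * I * m * x) :=
    hα.of_norm_bounded fun m => by rw [norm_mul, norm_exp]; simp
  rw [interpolant_eq_sum_tsum hα hf hN, hf x, sum_eq_tsum_indicator,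
    ← hsum.tsum_sub (summable_of_ne_finset_zero (s := s) fun m hm => Set.indicator_of_notMem hm _)]
  simp_rw [sub_mul, Set.indicator_mul_left]

end Sampling

theorem stmt_9_general (α : ℤ → ℂ) (hα : Summable fun m => ‖α m‖)
    (f : ℝ → ℂ)
    (hf : ∀ x : ℝ, f x = ∑' m : ℤ, α m * Complex.exp (2 * Real.pi * Complex.I * m * x))
    (n : ℕ) :
    (∫ x in (0:ℝ)..1,
        ‖f x - (1 / (2 * n + 1 : ℂ)) * ∑ j ∈ Finset.range (2 * n + 1),
            f ((j : ℝ) / (2 * n + 1)) *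
              ∑ l ∈ Finset.Icc (-(n : ℤ)) (n : ℤ),
                Complex.exp (2 * Real.pi * Complex.I * l * (x - (j : ℝ) / (2 * n + 1)))‖ ^ 2)
      = (∑' j : {j : ℤ // (n : ℤ) < |j|}, ‖α j.1‖ ^ 2)
        + ∑ k ∈ Finset.Icc (-(n : ℤ)) (n : ℤ),
            ‖∑' θ : {θ : ℤ // θ ≠ 0}, α (k + θ.1 * (2 * n + 1))‖ ^ 2 := by
  set s := Icc (-(n : ℤ)) n
  set A : ℤ → ℂ := fun l => ∑' θ : ℤ, α (l + θ * (2 * n + 1))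
  set γ : ℤ → ℂ := fun m => α m - (s : Set ℤ).indicator A m
  have herr : ∀ x : ℝ, f x - (1 / (2 * n + 1 : ℂ)) * ∑ j ∈ range (2 * n + 1),
      f ((j : ℝ) / (2 * n + 1)) *
        ∑ l ∈ s, exp (2 * π * I * l * (x - (j : ℝ) / (2 * n + 1)))
      = ∑' m, γ m * fourier m (x : AddCircle (1 : ℝ)) := fun x => by
    have h := sub_interpolant_eq_tsum hα hf (N := 2 * n + 1) (by omega) s x
    push_cast at h ⊢
    simp_rw [h, fourier_coe_apply, ofReal_one, div_one]
    rfl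
  have hγ : Summable fun m => ‖γ m‖ :=
    hα.congr_cofinite (s.eventually_cofinite_notMem.mono fun m hm => by simp [γ, hm])
  have hparseval := hasSum_sq_norm_intervalIntegral_tsum_fourier (T := 1) hγ 0
  rw [inv_one, one_mul, zero_add] at hparseval
  rw [intervalIntegral.integral_congr fun x _ => congrArg (‖·‖ ^ 2) (herr x), ← hparseval.tsum_eq,
    hparseval.summable.tsum_eq_tsum_lt_abs_add_sum_Icc n]
  congr 1
  · refine tsum_congr fun m => ?_
    have hm : m.1 ∉ s := by simpa [s, ← abs_le] using m.2
    simp [γ, hm]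
  · refine sum_congr rfl fun k hk => ?_
    simp only [γ, A, Set.indicator_of_mem (mem_coe.mpr hk), sub_add_cancel_left, norm_neg,
      hα.tsum_add_mul_eq_add_tsum_ne_zero (by omega : (2 * n + 1 : ℤ) ≠ 0) k]

theorem stmt_9 (α : ℤ → ℂ) (hα : Summable fun m => ‖α m‖)
    (f : ℝ → ℂ)
    (hf : ∀ x : ℝ, f x = ∑' m : ℤ, α m * Complex.exp (2 * Real.pi * Complex.I * m * x))
    (n : ℕ) (hn : 1 ≤ n) :
    (∫ x in (0:ℝ)..1,
        ‖f x - (1 / (2 * n + 1 : ℂ)) * ∑ j ∈ Finset.range (2 * n + 1),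
            f ((j : ℝ) / (2 * n + 1)) *
              ∑ l ∈ Finset.Icc (-(n : ℤ)) (n : ℤ),
                Complex.exp (2 * Real.pi * Complex.I * l * (x - (j : ℝ) / (2 * n + 1)))‖ ^ 2)
      = (∑' j : {j : ℤ // (n : ℤ) < |j|}, ‖α j.1‖ ^ 2)
        + ∑ k ∈ Finset.Icc (-(n : ℤ)) (n : ℤ),
            ‖∑' θ : {θ : ℤ // θ ≠ 0}, α (k + θ.1 * (2 * n + 1))‖ ^ 2 :=
  stmt_9_general α hα f hf n
end

section
/- Let γ : ℤ → ℝ be non-negative, symmetric (γ_{-k} = γ_k), square-summable and non-increasing on ℕ, with γ_j > 0 wherever required. Let α ∈ ℂ^ℤ satisfy ∑_{j: γ_j ≠ 0} |α_j|²/γ_j² ≤ 1 and α_j = 0 when γ_j = 0. Then for every n ≥ 1, ∑_{|j|>n} |α_j|² + ∑_{|k|≤n} |∑_{θ≠0} α_{k+θ(2n+1)}|² ≤ 2γ_{n+1}² + (1/n) ∑_{k>n} γ_k². -/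
/-!
Write `‖α j‖² = S j * γ j²` with `∑ S j ≤ 1`. The tail is then at most `γ²_{n+1} ∑ S j`. By
Cauchy–Schwarz each aliasing sum is at most `(∑_{θ≠0} S_{k+θ(2n+1)}) (∑_{θ≠0} γ²_{k+θ(2n+1)})`.
The residue classes `k + (2n+1)ℤ`, `|k| ≤ n`, are disjoint, so the first factors add up to at most
`1`. Since `γ` decreases in `|j|`, the second factor is at most
`∑_{l≥1} (γ²_{l(2n+1)−n} + γ²_{l(2n+1)})`. Apart from `γ²_{n+1}`, each of these samples is
dominated by the mean of `γ²` over the `n` indices just before it, and these windows are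
disjoint subsets of `{j > n}`.
-/

open Finset Function

lemma hasSum_sum_range_mul_add {α : Type*} [AddCommMonoid α] [TopologicalSpace α]
    [ContinuousAdd α] [RegularSpace α] {f : ℕ → α} {a : α} (hf : HasSum f a) (M : ℕ) [NeZero M] :
    HasSum (fun l => ∑ i ∈ range M, f (l * M + i)) a := by
  refine ((Nat.divModEquiv M).symm.hasSum_iff.mpr hf).prod_fiberwise fun l => ?_
  simpa [Fin.sum_univ_eq_sum_range (fun i => f (l * M + i))] using
    hasSum_fintype (fun i : Fin M => f (l * M + i))

lemma tsum_int_ne_zero {G : Type*} [AddCommGroup G] [UniformSpace G] [IsUniformAddGroup G]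
    [CompleteSpace G] [T2Space G] {f : ℤ → G} (hf : Summable f) :
    ∑' θ : {θ : ℤ // θ ≠ 0}, f θ = ∑' l : ℕ, (f (l + 1) + f (-(l + 1))) := by
  have hpos : Summable fun l : ℕ => f (l + 1) := hf.comp_injective fun l l' h => by simpa using h
  have hneg : Summable fun l : ℕ => f (-(l + 1)) := hf.comp_injective fun l l' h => by simpa using h
  set g := {θ : ℤ | θ ≠ 0}.indicator f
  have hgpos : ∀ l : ℕ, g (l + 1) = f (l + 1) := fun l => Set.indicator_of_mem (by simp; omega) f
  have hgneg : ∀ l : ℕ, g (-(l + 1)) = f (-(l + 1)) := fun l =>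
    Set.indicator_of_mem (by simp; omega) f
  have hg0 : g 0 = 0 := Set.indicator_of_notMem (by simp) f
  have hg := HasSum.of_add_one_of_neg_add_one (f := g) (by simpa only [hgpos] using hpos.hasSum)
    (by simpa only [hgneg] using hneg.hasSum)
  rw [hg0, add_zero, ← hpos.tsum_add hneg] at hg
  exact (hasSum_subtype_iff_indicator.mpr hg).tsum_eq

lemma norm_tsum_sq_le {ι E : Type*} [NormedAddCommGroup E] [CompleteSpace E] {a : ι → E}
    {s w : ι → ℝ} (hs0 : ∀ i, 0 ≤ s i) (hw0 : ∀ i, 0 ≤ w i) (hs : Summable s) (hw : Summable w)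
    (ha : ∀ i, ‖a i‖ ^ 2 = s i * w i) : ‖∑' i, a i‖ ^ 2 ≤ (∑' i, s i) * ∑' i, w i := by
  have hnorm : Summable fun i => ‖a i‖ := by
    refine ((hs.add hw).div_const 2).of_nonneg_of_le (fun i => norm_nonneg _) fun i => ?_
    linarith [two_mul_le_add_of_sq_le_mul (hs0 i) (hw0 i) (ha i).le]
  have hfinite : ∀ t : Finset ι, ∑ i ∈ t, ‖a i‖ ≤ √((∑' i, s i) * ∑' i, w i) := fun t =>
    Real.le_sqrt_of_sq_le <| (sum_sq_le_sum_mul_sum_of_sq_le_mul t (fun i _ => hs0 i)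
      (fun i _ => hw0 i) fun i _ => (ha i).le).trans <|
      mul_le_mul (hs.sum_le_tsum t fun i _ => hs0 i) (hw.sum_le_tsum t fun i _ => hw0 i)
        (sum_nonneg fun i _ => hw0 i) (tsum_nonneg hs0)
  calc ‖∑' i, a i‖ ^ 2 ≤ (∑' i, ‖a i‖) ^ 2 :=
        pow_le_pow_left₀ (norm_nonneg _) (norm_tsum_le_tsum_norm hnorm) 2
    _ ≤ √((∑' i, s i) * ∑' i, w i) ^ 2 :=
        pow_le_pow_left₀ (tsum_nonneg fun i => norm_nonneg _) (hnorm.tsum_le_of_sum_le hfinite) 2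
    _ = (∑' i, s i) * ∑' i, w i := Real.sq_sqrt (mul_nonneg (tsum_nonneg hs0) (tsum_nonneg hw0))

lemma sum_tsum_comp_le_tsum {ι κ β : Type*} {s : Finset ι} {f : β → ℝ} (hf0 : ∀ b, 0 ≤ f b)
    (hf : Summable f) {e : ι → κ → β}
    (he : ∀ i ∈ s, ∀ j ∈ s, ∀ x y, e i x = e j y → i = j ∧ x = y) :
    ∑ i ∈ s, ∑' x, f (e i x) ≤ ∑' b, f b := by
  have hinj : Injective fun p : s × κ => e p.1 p.2 := by
    rintro ⟨⟨i, hi⟩, x⟩ ⟨⟨j, hj⟩, y⟩ h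
    obtain ⟨rfl, rfl⟩ := he i hi j hj x y h
    rfl
  calc ∑ i ∈ s, ∑' x, f (e i x) = ∑' i : s, ∑' x, f (e i x) := (Finset.tsum_subtype s _).symm
    _ = ∑' p : s × κ, f (e p.1 p.2) :=
        ((hf.comp_injective hinj).tsum_prod' fun i =>
          hf.comp_injective (hinj.comp (Prod.mk_right_injective i))).symm
    _ ≤ ∑' b, f b := tsum_comp_le_tsum_of_inj hf hf0 hinj

lemma tsum_subtype_mul_le {ι : Type*} {s : Set ι} {S w : ι → ℝ} {c : ℝ} (hS0 : ∀ i, 0 ≤ S i)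
    (hS : Summable S) (hS1 : ∑' i, S i ≤ 1) (hw0 : ∀ i, 0 ≤ w i) (hc0 : 0 ≤ c)
    (hc : ∀ i ∈ s, w i ≤ c) : ∑' i : s, S i * w i ≤ c := by
  have hle : ∀ i : s, S i * w i ≤ S i * c := fun i => mul_le_mul_of_nonneg_left (hc i i.2) (hS0 i)
  calc ∑' i : s, S i * w i ≤ ∑' i : s, S i * c :=
        Summable.tsum_le_tsum hle (((hS.subtype s).mul_right c).of_nonneg_of_le
          (fun i => mul_nonneg (hS0 i) (hw0 i)) hle) ((hS.subtype s).mul_right c)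
    _ = (∑' i : s, S i) * c := tsum_mul_right
    _ ≤ 1 * c := mul_le_mul_of_nonneg_right ((hS.tsum_subtype_le S s hS0).trans hS1) hc0
    _ = c := one_mul c

lemma mul_add_le_sum_range {u : ℕ → ℝ} (hu : Antitone u) (hu0 : ∀ j, 0 ≤ u j) (a n : ℕ) :
    n * (u (a + n) + u (a + (2 * n + 1))) ≤ ∑ i ∈ range (2 * n + 1), u (a + i) := by
  rw [show 2 * n + 1 = n + (n + 1) by ring, sum_range_add]
  have hfirst : (n : ℝ) * u (a + n) ≤ ∑ i ∈ range n, u (a + i) := by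
    simpa using card_nsmul_le_sum (range n) (fun i => u (a + i)) _
      fun i hi => hu (by simp only [mem_range] at hi; omega)
  have hsecond : ((n : ℝ) + 1) * u (a + (n + (n + 1))) ≤
      ∑ i ∈ range (n + 1), u (a + (n + i)) := by
    simpa using card_nsmul_le_sum (range (n + 1)) (fun i => u (a + (n + i))) _
      fun i hi => hu (by simp only [mem_range] at hi; omega)
  nlinarith [hu0 (a + (n + (n + 1)))]

lemma tsum_two_samples_le {u : ℕ → ℝ} (hu : Antitone u) (hu0 : ∀ j, 0 ≤ u j) (hsum : Summable u)
    {n : ℕ} (hn : 1 ≤ n) :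
    ∑' l, (u (l * (2 * n + 1)) + u (l * (2 * n + 1) + n)) ≤ u 0 + (1 / n) * ∑' j, u j := by
  have hsample : ∀ c, Summable fun l => u (l * (2 * n + 1) + c) := fun c =>
    hsum.comp_injective fun l l' h => by simpa using h
  have hsample0 : Summable fun l => u (l * (2 * n + 1)) := by simpa using hsample 0
  have hshift : ∑' l, (u (l * (2 * n + 1)) + u (l * (2 * n + 1) + n))
      = u 0 + ∑' l, (u (l * (2 * n + 1) + n) + u (l * (2 * n + 1) + (2 * n + 1))) := by
    rw [hsample0.tsum_add (hsample n), hsample0.tsum_eq_zero_add,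
      (hsample n).tsum_add (hsample _)]
    simp only [add_one_mul, zero_mul]
    ring
  have hblocks := hasSum_sum_range_mul_add hsum.hasSum (2 * n + 1)
  have hnR : (0 : ℝ) < n := by exact_mod_cast hn
  rw [hshift, ← hblocks.tsum_eq, ← tsum_mul_left]
  gcongr u 0 + ?_
  refine Summable.tsum_le_tsum (fun l => ?_) ((hsample n).add (hsample _))
    (hblocks.summable.mul_left _)
  rw [one_div, inv_mul_eq_div, le_div_iff₀ hnR, mul_comm]
  exact mul_add_le_sum_range hu hu0 _ n

lemma Int.eq_and_eq_of_add_mul_eq_add_mul {k k' θ θ' M : ℤ} (hk : |k - k'| < M)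
    (h : k + θ * M = k' + θ' * M) : k = k' ∧ θ = θ' := by
  have hdvd : M ∣ k - k' := ⟨θ' - θ, by linarith⟩
  have hkk' : k = k' := by linarith [Int.eq_zero_of_abs_lt_dvd hdvd hk]
  refine ⟨hkk', mul_right_cancel₀ (b := M) ?_ (by linarith)⟩
  exact (lt_of_le_of_lt (abs_nonneg _) hk).ne'

lemma Int.add_mul_injective_s10 {M : ℤ} (hM : M ≠ 0) (k : ℤ) : Injective fun θ : ℤ => k + θ * M :=
  fun _ _ h => mul_right_cancel₀ hM (add_left_cancel h)

lemma sum_Icc_tsum_ne_zero_le_tsum {S : ℤ → ℝ} (hS0 : ∀ j, 0 ≤ S j) (hS : Summable S) (n : ℕ) :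
    ∑ k ∈ Icc (-(n : ℤ)) n, ∑' θ : {θ : ℤ // θ ≠ 0}, S (k + θ * (2 * n + 1)) ≤ ∑' j, S j := by
  refine sum_tsum_comp_le_tsum hS0 hS fun k hk k' hk' θ θ' h => ?_
  rw [mem_Icc] at hk hk'
  obtain ⟨rfl, hθ⟩ := Int.eq_and_eq_of_add_mul_eq_add_mul (by grind [abs_lt]) h
  exact ⟨rfl, Subtype.ext hθ⟩

lemma apply_le_apply_of_abs_le_abs {β : Type*} [Preorder β] {γ : ℤ → β}
    (hsym : ∀ k, γ (-k) = γ k) (hmono : ∀ k l : ℕ, k ≤ l → γ l ≤ γ k) {a b : ℤ}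
    (h : |a| ≤ |b|) : γ b ≤ γ a := by
  have hnatAbs : ∀ j : ℤ, γ j = γ j.natAbs := fun j => by
    rcases Int.natAbs_eq j with hj | hj
    · nth_rewrite 1 [hj]; rfl
    · nth_rewrite 1 [hj]; exact hsym _
  rw [hnatAbs a, hnatAbs b]
  exact hmono _ _ (by rwa [← Int.ofNat_le, Int.natCast_natAbs, Int.natCast_natAbs])

section RadiallyAntitone

variable {w : ℤ → ℝ} (hw : ∀ a b : ℤ, |a| ≤ |b| → w b ≤ w a)
include hw

lemma add_apply_add_sub_le {k n c : ℤ} (hk : |k| ≤ n) (hc : n ≤ c) :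
    w (k + c) + w (k - c) ≤ w (c - n) + w c := by
  rcases le_or_gt 0 k with hk0 | hk0
  · have h₁ : w (k + c) ≤ w c := hw _ _ (by grind [abs_le, le_abs])
    have h₂ : w (k - c) ≤ w (c - n) := hw _ _ (by grind [abs_le, le_abs])
    linarith
  · have h₁ : w (k + c) ≤ w (c - n) := hw _ _ (by grind [abs_le, le_abs])
    have h₂ : w (k - c) ≤ w c := hw _ _ (by grind [abs_le, le_abs])
    linarith

lemma tsum_ne_zero_add_mul_le (hw0 : ∀ j, 0 ≤ w j) (hsum : Summable w) {n : ℕ} (hn : 1 ≤ n)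
    {k : ℤ} (hk : |k| ≤ n) :
    ∑' θ : {θ : ℤ // θ ≠ 0}, w (k + θ * (2 * n + 1))
      ≤ w (n + 1) + (1 / (n : ℝ)) * ∑' j : ℕ, w (n + 1 + j) := by
  set u : ℕ → ℝ := fun j => w (n + 1 + j)
  have hu : Antitone u := fun i j hij => hw _ _ (by grind [abs_le, le_abs])
  have husum : Summable u := hsum.comp_injective fun i j h => by simpa [u] using h
  have hsample : ∀ c, Summable fun l => u (l * (2 * n + 1) + c) := fun c =>
    husum.comp_injective fun l l' h => by simpa using h
  have hpair : ∀ l : ℕ, w (k + (l + 1) * (2 * n + 1)) + w (k + -(l + 1) * (2 * n + 1))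
      ≤ u (l * (2 * n + 1)) + u (l * (2 * n + 1) + n) := by
    intro l
    have := add_apply_add_sub_le hw (c := (l + 1) * (2 * n + 1)) hk (by nlinarith)
    convert this using 2 <;> exact congrArg w (by push_cast; ring)
  calc ∑' θ : {θ : ℤ // θ ≠ 0}, w (k + θ * (2 * n + 1))
      = ∑' l : ℕ, (w (k + (l + 1) * (2 * n + 1)) + w (k + -(l + 1) * (2 * n + 1))) :=
        tsum_int_ne_zero (hsum.comp_injective (Int.add_mul_injective_s10 (by omega) k))
    _ ≤ ∑' l : ℕ, (u (l * (2 * n + 1)) + u (l * (2 * n + 1) + n)) := by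
        have hsamples := (hsample 0).add (hsample n)
        simp only [add_zero] at hsamples
        exact Summable.tsum_le_tsum hpair (hsamples.of_nonneg_of_le
          (fun l => add_nonneg (hw0 _) (hw0 _)) hpair) hsamples
    _ ≤ u 0 + (1 / (n : ℝ)) * ∑' j, u j := tsum_two_samples_le hu (fun j => hw0 _) husum hn
    _ = w (n + 1) + (1 / (n : ℝ)) * ∑' j : ℕ, w (n + 1 + j) := by simp [u]

lemma norm_tsum_ne_zero_sq_le {E : Type*} [NormedAddCommGroup E] [CompleteSpace E] {a : ℤ → E}
    {S : ℤ → ℝ} (hS0 : ∀ j, 0 ≤ S j) (hS : Summable S) (ha : ∀ j, ‖a j‖ ^ 2 = S j * w j)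
    (hw0 : ∀ j, 0 ≤ w j) (hsum : Summable w) {n : ℕ} (hn : 1 ≤ n) {k : ℤ} (hk : |k| ≤ n) :
    ‖∑' θ : {θ : ℤ // θ ≠ 0}, a (k + θ * (2 * n + 1))‖ ^ 2
      ≤ (∑' θ : {θ : ℤ // θ ≠ 0}, S (k + θ * (2 * n + 1)))
        * (w (n + 1) + (1 / (n : ℝ)) * ∑' j : ℕ, w (n + 1 + j)) := by
  have hinj := (Int.add_mul_injective_s10 (M := 2 * n + 1) (by omega) k).comp
    (Subtype.val_injective (p := (· ≠ 0)))
  refine (norm_tsum_sq_le (fun _ => hS0 _) (fun _ => hw0 _) (hS.comp_injective hinj)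
    (hsum.comp_injective hinj) fun _ => ha _).trans ?_
  exact mul_le_mul_of_nonneg_left (tsum_ne_zero_add_mul_le hw hw0 hsum hn hk)
    (tsum_nonneg fun _ => hS0 _)

end RadiallyAntitone

theorem stmt_10 (γ : ℤ → ℝ) (hnn : ∀ k, 0 ≤ γ k) (hsym : ∀ k : ℤ, γ (-k) = γ k)
    (hsum : Summable fun k : ℤ => γ k ^ 2)
    (hmono : ∀ k l : ℕ, k ≤ l → γ (l : ℤ) ≤ γ (k : ℤ))
    (α : ℤ → ℂ) (hα0 : ∀ j : ℤ, γ j = 0 → α j = 0)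
    (hαsum : Summable fun j : ℤ => if γ j = 0 then 0 else ‖α j‖ ^ 2 / γ j ^ 2)
    (hα1 : (∑' j : ℤ, if γ j = 0 then 0 else ‖α j‖ ^ 2 / γ j ^ 2) ≤ 1)
    (n : ℕ) (hn : 1 ≤ n) :
    (∑' j : {j : ℤ // (n : ℤ) < |j|}, ‖α j.1‖ ^ 2)
      + ∑ k ∈ Finset.Icc (-(n : ℤ)) (n : ℤ),
          ‖∑' θ : {θ : ℤ // θ ≠ 0}, α (k + θ.1 * (2 * n + 1))‖ ^ 2
    ≤ 2 * γ ((n : ℤ) + 1) ^ 2 + (1 / (n : ℝ)) * ∑' k : ℕ, γ ((n : ℤ) + 1 + k) ^ 2 := by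
  set S : ℤ → ℝ := fun j => if γ j = 0 then 0 else ‖α j‖ ^ 2 / γ j ^ 2
  set B := γ ((n : ℤ) + 1) ^ 2 + (1 / (n : ℝ)) * ∑' k : ℕ, γ ((n : ℤ) + 1 + k) ^ 2
  have hS0 : ∀ j, 0 ≤ S j := fun j => by simp only [S]; split_ifs <;> positivity
  have hw0 : ∀ j, 0 ≤ γ j ^ 2 := fun j => sq_nonneg _
  have hw : ∀ a b : ℤ, |a| ≤ |b| → γ b ^ 2 ≤ γ a ^ 2 := fun a b h =>
    pow_le_pow_left₀ (hnn b) (apply_le_apply_of_abs_le_abs hsym hmono h) 2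
  have hαS : ∀ j, ‖α j‖ ^ 2 = S j * γ j ^ 2 := fun j => by
    by_cases h : γ j = 0 <;> simp [S, h, hα0]
  have htail : ∑' j : {j : ℤ // (n : ℤ) < |j|}, ‖α j.1‖ ^ 2 ≤ γ ((n : ℤ) + 1) ^ 2 := by
    simp_rw [hαS]
    exact tsum_subtype_mul_le (s := {j : ℤ | (n : ℤ) < |j|}) hS0 hαsum hα1 hw0 (hw0 _)
      fun j hj => hw _ _ (by grind [abs_le, le_abs])
  have halias : ∀ k ∈ Icc (-(n : ℤ)) n,
      ‖∑' θ : {θ : ℤ // θ ≠ 0}, α (k + θ.1 * (2 * n + 1))‖ ^ 2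
        ≤ (∑' θ : {θ : ℤ // θ ≠ 0}, S (k + θ.1 * (2 * n + 1))) * B := fun k hk =>
    norm_tsum_ne_zero_sq_le hw hS0 hαsum hαS hw0 hsum hn (abs_le.mpr (mem_Icc.mp hk))
  have hmass := (sum_Icc_tsum_ne_zero_le_tsum hS0 hαsum n).trans hα1
  calc _ ≤ γ ((n : ℤ) + 1) ^ 2
        + (∑ k ∈ Icc (-(n : ℤ)) n, ∑' θ : {θ : ℤ // θ ≠ 0}, S (k + θ.1 * (2 * n + 1))) * B := by
        rw [sum_mul]; exact add_le_add htail (sum_le_sum halias)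
    _ ≤ γ ((n : ℤ) + 1) ^ 2 + 1 * B := by gcongr
    _ = _ := by ring
end

section
/- Let A be an n×n Hermitian positive semi-definite matrix with entries a_{jk}. Then the matrix with entries |a_{jk}|² − (1/n) a_{jj} a_{kk} is positive semi-definite. -/
/-!
Write `A = Bᴴ B` and let `b_j` be the columns of `B`, so that `a_jk = ⟪b_j, b_k⟫`. For the
rank-one matrices `W_j = b_j b_jᴴ` and the Frobenius inner product we get `⟪W_j, W_k⟫ = |a_jk|²`,
`⟪W_j, 1⟫ = a_jj` and `‖1‖² = n`. Hence the matrix `(|a_jk|² - a_jj a_kk / n)` is the Gram matrix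
of the traceless parts `W_j - (a_jj / n) 1`, and Gram matrices are positive semidefinite.
-/

open ComplexOrder Matrix
open scoped InnerProductSpace

namespace Matrix

section Gram

variable {ι 𝕜 E : Type*} [RCLike 𝕜] [NormedAddCommGroup E] [InnerProductSpace 𝕜 E]

lemma gram_sub_inner_div_norm_sq_smul (v : ι → E) (u : E) :
    gram 𝕜 (fun j ↦ v j - (⟪u, v j⟫_𝕜 / (‖u‖ : 𝕜) ^ 2) • u) =
      gram 𝕜 v - of fun j k ↦ ⟪v j, u⟫_𝕜 * ⟪u, v k⟫_𝕜 / (‖u‖ : 𝕜) ^ 2 := by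
  rcases eq_or_ne u 0 with rfl | hu
  · ext; simp
  have hu' : (‖u‖ : 𝕜) ≠ 0 := by simpa using hu
  ext j k
  simp only [gram_apply, sub_apply, of_apply, inner_sub_left, inner_sub_right, inner_smul_left,
    inner_smul_right, map_div₀, inner_conj_symm, inner_self_eq_norm_sq_to_K]
  field_simp
  ring

theorem posSemidef_gram_sub_inner_mul_inner_div [Finite ι] (v : ι → E) (u : E) :
    (gram 𝕜 v - of fun j k ↦ ⟪v j, u⟫_𝕜 * ⟪u, v k⟫_𝕜 / (‖u‖ : 𝕜) ^ 2).PosSemidef :=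
  gram_sub_inner_div_norm_sq_smul (𝕜 := 𝕜) v u ▸ posSemidef_gram 𝕜 _

end Gram

section Frobenius

variable {ι κ 𝕜 : Type*} [RCLike 𝕜] [Fintype κ]

lemma inner_toLp_vec {m n : Type*} [Fintype m] [Fintype n] (X Y : Matrix m n 𝕜) :
    ⟪WithLp.toLp 2 (vec X), WithLp.toLp 2 (vec Y)⟫_𝕜 = (Xᴴ * Y).trace := by
  rw [EuclideanSpace.inner_toLp_toLp, dotProduct_comm, star_vec_dotProduct_vec]

lemma inner_toLp_vec_vecMulVec_col (B : Matrix κ ι 𝕜) (j k : ι) :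
    ⟪WithLp.toLp 2 (vec (vecMulVec (Bᵀ j) (star (Bᵀ j)))),
      WithLp.toLp 2 (vec (vecMulVec (Bᵀ k) (star (Bᵀ k))))⟫_𝕜 = (‖(Bᴴ * B) j k‖ : 𝕜) ^ 2 := by
  rw [inner_toLp_vec, conjTranspose_vecMulVec, star_star, vecMulVec_mul_vecMulVec,
    trace_vecMulVec, ← RCLike.mul_conj]
  simp only [dotProduct, transpose_apply, Pi.star_apply, RCLike.star_def, Pi.smul_apply,
    smul_eq_mul, Finset.sum_mul, Finset.mul_sum, mul_apply, conjTranspose_apply, map_sum, map_mul,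
    RCLike.conj_conj]
  exact Finset.sum_congr rfl fun _ _ ↦ Finset.sum_congr rfl fun _ _ ↦ by ring

variable [DecidableEq κ]

lemma inner_toLp_vec_vecMulVec_col_one (B : Matrix κ ι 𝕜) (j : ι) :
    ⟪WithLp.toLp 2 (vec (vecMulVec (Bᵀ j) (star (Bᵀ j)))),
      WithLp.toLp 2 (vec (1 : Matrix κ κ 𝕜))⟫_𝕜 = (Bᴴ * B) j j := by
  rw [inner_toLp_vec, conjTranspose_vecMulVec, star_star, Matrix.mul_one, trace_vecMulVec]
  simp [mul_apply, dotProduct, mul_comm]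

lemma inner_toLp_vec_one_vecMulVec_col (B : Matrix κ ι 𝕜) (k : ι) :
    ⟪WithLp.toLp 2 (vec (1 : Matrix κ κ 𝕜)),
      WithLp.toLp 2 (vec (vecMulVec (Bᵀ k) (star (Bᵀ k))))⟫_𝕜 = (Bᴴ * B) k k := by
  rw [inner_toLp_vec, conjTranspose_one, Matrix.one_mul, trace_vecMulVec]
  simp [mul_apply, dotProduct, mul_comm]

lemma norm_toLp_vec_one_sq :
    (‖WithLp.toLp 2 (vec (1 : Matrix κ κ 𝕜))‖ : 𝕜) ^ 2 = Fintype.card κ := by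
  rw [← inner_self_eq_norm_sq_to_K, inner_toLp_vec]
  simp

end Frobenius

theorem PosSemidef.posSemidef_norm_sq_sub_inv_card_mul_diag {ι 𝕜 : Type*} [RCLike 𝕜] [Fintype ι]
    {A : Matrix ι ι 𝕜} (hA : A.PosSemidef) :
    (of fun j k ↦ (‖A j k‖ : 𝕜) ^ 2 - (Fintype.card ι : 𝕜)⁻¹ * A j j * A k k).PosSemidef := by
  classical
  obtain ⟨B, rfl⟩ : ∃ B : Matrix ι ι 𝕜, A = Bᴴ * B := by
    open scoped MatrixOrder Matrix.Norms.L2Operator in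
    exact CStarAlgebra.nonneg_iff_eq_star_mul_self.mp hA.nonneg
  convert posSemidef_gram_sub_inner_mul_inner_div (𝕜 := 𝕜)
    (fun j ↦ WithLp.toLp 2 (vec (vecMulVec (Bᵀ j) (star (Bᵀ j)))))
    (WithLp.toLp 2 (vec (1 : Matrix ι ι 𝕜))) using 1
  ext j k
  simp only [of_apply, sub_apply, gram_apply, inner_toLp_vec_vecMulVec_col,
    inner_toLp_vec_vecMulVec_col_one, inner_toLp_vec_one_vecMulVec_col, norm_toLp_vec_one_sq]
  ring

end Matrix

theorem stmt_13_general (n : ℕ) (A : Matrix (Fin n) (Fin n) ℂ)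
    (hA : A.PosSemidef) :
    (Matrix.of fun j k : Fin n =>
      ((‖A j k‖ ^ 2 : ℝ) : ℂ) - (1 / n : ℂ) * A j j * A k k).PosSemidef := by
  simpa using hA.posSemidef_norm_sq_sub_inv_card_mul_diag

theorem stmt_13 (n : ℕ) (hn : 0 < n) (A : Matrix (Fin n) (Fin n) ℂ)
    (hA : A.PosSemidef) :
    (Matrix.of fun j k : Fin n =>
      ((‖A j k‖ ^ 2 : ℝ) : ℂ) - (1 / n : ℂ) * A j j * A k k).PosSemidef :=
  stmt_13_general n A hA
end
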